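/- arXiv:2504.19428 — 6 statements merged into one kernel-verified Lean document; each statement's English description precedes it below -/
import Mathlib

section
/- For every real α, every t > 0 and every x > 0, the limit as x₀ → 0⁺ of f₊(x₀, x; t; α) / (1 − e^{−x₀ μ(t;α)}) equals (1/β(t;α)) e^{−x/β(t;α)}. (This is the density of the final population of a Feller diffusion descended from a single founder at time zero and conditioned on non-extinction; Lemma 2 / O'Connell's theorem.) -/
open MeasureTheory Real Filter Set

/-- `muF t α` is the function μ(t;α) = 2α e^{αt}/(e^{αt} − 1) for α ≠ 0, and 2/t for α = 0. -/
noncomputable def muF (t α : ℝ) : ℝ :=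
  if α = 0 then 2 / t else 2 * α * Real.exp (α * t) / (Real.exp (α * t) - 1)

/-- `betaF t α` is the function β(t;α) = (e^{αt} − 1)/(2α) for α ≠ 0, and t/2 for α = 0. -/
noncomputable def betaF (t α : ℝ) : ℝ :=
  if α = 0 then t / 2 else (Real.exp (α * t) - 1) / (2 * α)

/-- `fl l x₀ x t α` is the term f_l(x₀, x; t; α), the joint density contribution from `l`
founding families. -/
noncomputable def fl (l : ℕ) (x₀ x t α : ℝ) : ℝ :=
  Real.exp (-(x₀ * muF t α)) * (x₀ * muF t α) ^ l / (Nat.factorial l : ℝ) *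
    (x ^ (l - 1) * Real.exp (-(x / betaF t α)) / (betaF t α ^ l * (Nat.factorial (l - 1) : ℝ)))

/-- `fplus x₀ x t α` = ∑_{l=1}^∞ f_l(x₀, x; t; α), the absolutely continuous part of the
Feller-diffusion transition density. -/
noncomputable def fplus (x₀ x t α : ℝ) : ℝ := ∑' l : ℕ, fl (l + 1) x₀ x t α

lemma betaF_pos {t : ℝ} (α : ℝ) (ht : 0 < t) : 0 < betaF t α := by
  unfold betaF
  rcases eq_or_ne α 0 with h | h
  · simp [h]; linarith
  · simp only [h, if_false]
    rcases lt_or_gt_of_ne h with hα | hα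
    · apply div_pos_of_neg_of_neg
      · have h1 : α * t < 0 := mul_neg_of_neg_of_pos hα ht
        have := Real.exp_lt_one_iff.mpr h1
        linarith
      · linarith
    · apply div_pos
      · have h1 : 0 < α * t := mul_pos hα ht
        have := Real.one_lt_exp_iff.mpr h1
        linarith
      · linarith

lemma muF_pos {t : ℝ} (α : ℝ) (ht : 0 < t) : 0 < muF t α := by
  unfold muF
  rcases eq_or_ne α 0 with h | h
  · simp [h]; positivity
  · simp only [h, if_false]
    have he : 0 < Real.exp (α * t) := Real.exp_pos _
    rcases lt_or_gt_of_ne h with hα | hα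
    · apply div_pos_of_neg_of_neg
      · nlinarith
      · have := Real.exp_lt_one_iff.mpr (mul_neg_of_neg_of_pos hα ht); linarith
    · apply div_pos
      · nlinarith
      · have := Real.one_lt_exp_iff.mpr (mul_pos hα ht); linarith

noncomputable def Sterm (u : ℝ) (l : ℕ) : ℝ :=
  u ^ l / ((Nat.factorial (l + 1) : ℝ) * (Nat.factorial l : ℝ))

noncomputable def Sfun (u : ℝ) : ℝ := ∑' l : ℕ, Sterm u l

lemma Sterm_nonneg {u : ℝ} (hu : 0 ≤ u) (l : ℕ) : 0 ≤ Sterm u l := by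
  unfold Sterm; positivity

lemma Sterm_le {u : ℝ} (hu : 0 ≤ u) (l : ℕ) :
    Sterm u l ≤ u ^ l / (Nat.factorial l : ℝ) := by
  unfold Sterm
  apply div_le_div_of_nonneg_left (by positivity) (by positivity)
  calc (Nat.factorial l : ℝ) = 1 * Nat.factorial l := (one_mul _).symm
    _ ≤ (Nat.factorial (l+1) : ℝ) * Nat.factorial l := by
        apply mul_le_mul_of_nonneg_right _ (by positivity)
        exact_mod_cast Nat.one_le_iff_ne_zero.mpr (Nat.factorial_ne_zero _)

lemma Sfun_summable {u : ℝ} (hu : 0 ≤ u) : Summable (Sterm u) :=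
  Summable.of_nonneg_of_le (Sterm_nonneg hu) (Sterm_le hu)
    (Real.summable_pow_div_factorial u)

lemma one_le_Sfun {u : ℝ} (hu : 0 ≤ u) : 1 ≤ Sfun u := by
  have h0 : Sterm u 0 = 1 := by simp [Sterm]
  have := Summable.le_tsum (Sfun_summable hu) 0 (fun i _ => Sterm_nonneg hu i)
  rw [h0] at this
  exact this

lemma Sfun_le_exp {u : ℝ} (hu : 0 ≤ u) : Sfun u ≤ Real.exp u := by
  have hexp : Real.exp u = ∑' n : ℕ, u ^ n / (Nat.factorial n : ℝ) := by
    rw [Real.exp_eq_exp_ℝ, NormedSpace.exp_eq_tsum_div]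
  rw [hexp]
  exact Summable.tsum_le_tsum (Sterm_le hu) (Sfun_summable hu) (Real.summable_pow_div_factorial u)

lemma Sfun_tendsto_one :
    Tendsto Sfun (nhdsWithin 0 (Set.Ici 0)) (nhds 1) := by
  have h1 : Tendsto (fun _ : ℝ => (1:ℝ)) (nhdsWithin 0 (Set.Ici 0)) (nhds 1) := tendsto_const_nhds
  have h2 : Tendsto (fun u : ℝ => Real.exp u) (nhdsWithin 0 (Set.Ici 0)) (nhds 1) := by
    have := (Real.continuous_exp.tendsto 0).mono_left (nhdsWithin_le_nhds (s := Set.Ici (0:ℝ)))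
    simpa using this
  apply tendsto_of_tendsto_of_tendsto_of_le_of_le' h1 h2
  · filter_upwards [self_mem_nhdsWithin] with u hu using one_le_Sfun hu
  · filter_upwards [self_mem_nhdsWithin] with u hu using Sfun_le_exp hu

lemma tendsto_div_one_sub_exp :
    Tendsto (fun c : ℝ => c / (1 - Real.exp (-c))) (nhdsWithin 0 (Set.Ioi 0)) (nhds 1) := by
  have hd : HasDerivAt Real.exp 1 0 := by simpa using Real.hasDerivAt_exp 0
  have hslope := hasDerivAt_iff_tendsto_slope.mp hd
  have hneg : Tendsto (fun c : ℝ => -c) (nhdsWithin 0 (Set.Ioi 0)) (nhdsWithin 0 {(0:ℝ)}ᶜ) := by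
    apply tendsto_nhdsWithin_of_tendsto_nhds_of_eventually_within
    · simpa using (continuous_neg.tendsto (0:ℝ)).mono_left nhdsWithin_le_nhds
    · filter_upwards [self_mem_nhdsWithin] with c hc
      simp only [Set.mem_compl_iff, Set.mem_singleton_iff]
      exact neg_ne_zero.mpr (ne_of_gt hc)
  have hcomp : Tendsto (fun c : ℝ => (1 - Real.exp (-c)) / c)
      (nhdsWithin 0 (Set.Ioi 0)) (nhds 1) := by
    have := hslope.comp hneg
    refine this.congr (fun c => ?_)
    simp only [Function.comp_apply, slope_def_field]
    rw [sub_zero, Real.exp_zero]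
    ring
  have := hcomp.inv₀ one_ne_zero
  simp only [inv_div, inv_one] at this
  exact this

lemma fplus_eq (t α x₀ x : ℝ) (hβ : betaF t α ≠ 0) :
    fplus x₀ x t α = Real.exp (-(x₀ * muF t α)) * (Real.exp (-(x / betaF t α)) / betaF t α) *
      ((x₀ * muF t α) * Sfun (x₀ * muF t α * x / betaF t α)) := by
  unfold fplus Sfun
  rw [← tsum_mul_left, ← tsum_mul_left]
  congr 1; funext l
  unfold fl Sterm
  have h1 : l + 1 - 1 = l := rfl
  rw [h1]
  have hf1 : (Nat.factorial (l + 1) : ℝ) ≠ 0 := by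
    exact_mod_cast Nat.factorial_ne_zero _
  have hf2 : (Nat.factorial l : ℝ) ≠ 0 := by
    exact_mod_cast Nat.factorial_ne_zero _
  field_simp
  have hb : betaF t α ^ l * (betaF t α)⁻¹ ^ l = 1 := by
    rw [← mul_pow, mul_inv_cancel₀ hβ, one_pow]
  linear_combination (-(x₀ * x₀ ^ l * muF t α * muF t α ^ l * x ^ l * betaF t α)) * hb

theorem stmt0 (α t x : ℝ) (ht : 0 < t) (hx : 0 < x) :
    Filter.Tendsto (fun x₀ => fplus x₀ x t α / (1 - Real.exp (-(x₀ * muF t α))))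
      (nhdsWithin 0 (Set.Ioi 0))
      (nhds ((1 / betaF t α) * Real.exp (-(x / betaF t α)))) := by
  have hβ : 0 < betaF t α := betaF_pos α ht
  have hμ : 0 < muF t α := muF_pos α ht
  set μ := muF t α
  set β := betaF t α
  -- rewrite the function
  have heq : ∀ x₀ : ℝ, fplus x₀ x t α / (1 - Real.exp (-(x₀ * μ))) =
      Real.exp (-(x₀ * μ)) * (Real.exp (-(x / β)) / β) * Sfun (x₀ * μ * x / β) *
        ((x₀ * μ) / (1 - Real.exp (-(x₀ * μ)))) := by
    intro x₀
    rw [fplus_eq t α x₀ x (ne_of_gt hβ)]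
    rw [div_eq_mul_inv, div_eq_mul_inv]
    ring
  have hc : Tendsto (fun x₀ : ℝ => x₀ * μ) (nhdsWithin 0 (Set.Ioi 0))
      (nhdsWithin 0 (Set.Ioi 0)) := by
    apply tendsto_nhdsWithin_of_tendsto_nhds_of_eventually_within
    · have : Tendsto (fun x₀ : ℝ => x₀ * μ) (nhds 0) (nhds (0 * μ)) :=
        (continuous_mul_right μ).tendsto 0
      simpa using this.mono_left (nhdsWithin_le_nhds (s := Set.Ioi (0:ℝ)))
    · filter_upwards [self_mem_nhdsWithin] with x₀ hx₀
      exact mul_pos hx₀ hμ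
  have T1 : Tendsto (fun x₀ : ℝ => Real.exp (-(x₀ * μ))) (nhdsWithin 0 (Set.Ioi 0)) (nhds 1) := by
    have : Tendsto (fun c : ℝ => Real.exp (-c)) (nhdsWithin 0 (Set.Ioi 0)) (nhds 1) := by
      have := ((Real.continuous_exp.comp continuous_neg).tendsto 0).mono_left
        (nhdsWithin_le_nhds (s := Set.Ioi (0:ℝ)))
      simpa [Function.comp_def] using this
    exact this.comp hc
  have hu : Tendsto (fun x₀ : ℝ => x₀ * μ * x / β) (nhdsWithin 0 (Set.Ioi 0))
      (nhdsWithin 0 (Set.Ici 0)) := by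
    apply tendsto_nhdsWithin_of_tendsto_nhds_of_eventually_within
    · have : Tendsto (fun x₀ : ℝ => x₀ * μ * x / β) (nhds 0) (nhds (0 * μ * x / β)) := by
        exact Tendsto.div_const (Tendsto.mul_const x ((continuous_mul_right μ).tendsto 0)) β
      simpa using this.mono_left (nhdsWithin_le_nhds (s := Set.Ioi (0:ℝ)))
    · filter_upwards [self_mem_nhdsWithin] with x₀ hx₀
      have : 0 < x₀ * μ * x / β := by
        apply div_pos (mul_pos (mul_pos hx₀ hμ) hx) hβ
      exact le_of_lt this
  have T2 : Tendsto (fun x₀ : ℝ => Sfun (x₀ * μ * x / β)) (nhdsWithin 0 (Set.Ioi 0)) (nhds 1) :=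
    Sfun_tendsto_one.comp hu
  have T3 : Tendsto (fun x₀ : ℝ => (x₀ * μ) / (1 - Real.exp (-(x₀ * μ))))
      (nhdsWithin 0 (Set.Ioi 0)) (nhds 1) := tendsto_div_one_sub_exp.comp hc
  have Tprod := ((T1.mul_const (Real.exp (-(x / β)) / β)).mul T2).mul T3
  have hval : 1 * (Real.exp (-(x / β)) / β) * 1 * 1 = (1 / β) * Real.exp (-(x / β)) := by
    ring
  rw [hval] at Tprod
  exact Tprod.congr (fun x₀ => (heq x₀).symm)
end

section
/- For every real α, all 0 < s < t and every x > 0, one has ∫₀^∞ e^{−z/β(t−s;α)} f₊(z, x; s; α) dz = (μ(t;α) β(t−s;α)) / (β(t;α) μ(t−s;α)) · e^{−x/β(t;α)}. (This Chapman–Kolmogorov-type identity is exactly the statement that the conditional density of the population at an intermediate time in Theorem 5 integrates to one.) -/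
open MeasureTheory Real Filter Set

lemma betaF_pos_s2 {α u : ℝ} (hu : 0 < u) : 0 < betaF u α := by
  unfold betaF
  split_ifs with h
  · linarith
  rcases (Ne.lt_or_gt h) with hneg | hpos
  · apply div_pos_of_neg_of_neg
    · simpa using Real.exp_lt_one_iff.mpr (mul_neg_of_neg_of_pos hneg hu)
    · linarith
  · apply div_pos
    · simpa using Real.one_lt_exp_iff.mpr (mul_pos hpos hu)
    · linarith

lemma muF_mul_betaF {α u : ℝ} (hu : 0 < u) : muF u α * betaF u α = Real.exp (α * u) := by
  unfold muF betaF
  split_ifs with h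
  · rw [h, zero_mul, Real.exp_zero]
    field_simp [hu.ne']
  · have h1 : Real.exp (α * u) - 1 ≠ 0 := by
      intro hc
      have he : Real.exp (α * u) = Real.exp 0 := by rw [Real.exp_zero]; linarith
      exact (mul_ne_zero h hu.ne') (Real.exp_eq_exp.mp he)
    have h2 : (2 : ℝ) * α ≠ 0 := by simpa using h
    field_simp

lemma muF_eq {α u : ℝ} (hu : 0 < u) : muF u α = Real.exp (α * u) / betaF u α :=
  (eq_div_iff (betaF_pos_s2 hu).ne').mpr (muF_mul_betaF hu)

lemma muF_pos_s2 {α u : ℝ} (hu : 0 < u) : 0 < muF u α := by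
  rw [muF_eq hu]; exact div_pos (Real.exp_pos _) (betaF_pos_s2 hu)

lemma betaF_add (α s t : ℝ) :
    betaF t α = betaF s α + betaF (t - s) α * Real.exp (α * s) := by
  unfold betaF
  split_ifs with h
  · rw [h]; simp; ring
  · have h2 : (2 : ℝ) * α ≠ 0 := by simpa using h
    have hEt : Real.exp (α * t) = Real.exp (α * (t - s)) * Real.exp (α * s) := by
      rw [← Real.exp_add]; ring_nf
    rw [hEt]
    field_simp
    ring

lemma integrable_pow_mul_exp (n : ℕ) {a : ℝ} (ha : 0 < a) :
    IntegrableOn (fun z : ℝ => z ^ n * Real.exp (-(a * z))) (Ioi (0 : ℝ)) := by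
  have h := integrableOn_rpow_mul_exp_neg_mul_rpow (s := (n : ℝ)) (p := 1)
    (lt_of_lt_of_le (by norm_num) (Nat.cast_nonneg n)) one_pos ha
  refine h.congr_fun (fun z hz => ?_) measurableSet_Ioi
  dsimp only
  rw [Real.rpow_one, Real.rpow_natCast, neg_mul]

lemma integral_pow_mul_exp (n : ℕ) {a : ℝ} (ha : 0 < a) :
    ∫ z in Ioi (0 : ℝ), z ^ n * Real.exp (-(a * z)) = (n.factorial : ℝ) / a ^ (n + 1) := by
  have h := Real.integral_rpow_mul_exp_neg_mul_Ioi (a := (n : ℝ) + 1) (r := a)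
    (by positivity) ha
  have e1 : ∫ z in Ioi (0 : ℝ), z ^ n * Real.exp (-(a * z))
      = ∫ z in Ioi (0 : ℝ), z ^ ((n : ℝ) + 1 - 1) * Real.exp (-(a * z)) := by
    refine setIntegral_congr_fun measurableSet_Ioi (fun z hz => ?_)
    rw [show (n : ℝ) + 1 - 1 = (n : ℝ) by ring, Real.rpow_natCast]
  have hG : Real.Gamma ((n : ℝ) + 1) = (n.factorial : ℝ) := Real.Gamma_nat_eq_factorial n
  rw [e1, h, hG, show ((n : ℝ) + 1) = ((n + 1 : ℕ) : ℝ) by push_cast; ring, Real.rpow_natCast]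
  rw [one_div, inv_pow]
  ring

theorem stmt2 (α s t x : ℝ) (hs : 0 < s) (hst : s < t) (hx : 0 < x) :
    ∫ z in Set.Ioi (0 : ℝ), Real.exp (-(z / betaF (t - s) α)) * fplus z x s α
      = (muF t α * betaF (t - s) α) / (betaF t α * muF (t - s) α) *
          Real.exp (-(x / betaF t α)) := by
  have hts : 0 < t - s := by linarith
  have ht : 0 < t := by linarith
  have hβs : 0 < betaF s α := betaF_pos_s2 hs
  have hb' : 0 < betaF (t - s) α := betaF_pos_s2 hts
  have hβt : 0 < betaF t α := betaF_pos_s2 ht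
  have hμs : 0 < muF s α := muF_pos_s2 hs
  have hμ' : 0 < muF (t - s) α := muF_pos_s2 hts
  set μs := muF s α with hμs_def
  set βs := betaF s α with hβs_def
  set b' := betaF (t - s) α with hb'_def
  set βt := betaF t α with hβt_def
  have hβs0 : βs ≠ 0 := hβs.ne'
  have hb'0 : b' ≠ 0 := hb'.ne'
  have hβt0 : βt ≠ 0 := hβt.ne'
  set F : ℕ → ℝ → ℝ := fun l z => Real.exp (-(z / b')) * fl (l + 1) z x s α with hF_def
  set a : ℝ := 1 / b' + μs with ha_def
  have ha : 0 < a := by positivity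
  have ha0 : a ≠ 0 := ha.ne'
  have h5 : βt = βs * b' * a := by
    rw [hβt_def, betaF_add α s t, ← muF_mul_betaF hs, ha_def, ← hβs_def, ← hμs_def]
    field_simp
    ring
  have haμ : b' * (a - μs) = 1 := by
    rw [ha_def]; field_simp; ring
  have key : ∀ (l : ℕ) (z : ℝ),
      F l z = (μs ^ (l + 1) * x ^ l * Real.exp (-(x / βs)) /
          (((l + 1).factorial : ℝ) * βs ^ (l + 1) * (l.factorial : ℝ)))
        * (z ^ (l + 1) * Real.exp (-(a * z))) := by
    intro l z
    have hE : Real.exp (-(a * z)) = Real.exp (-(z * μs)) * Real.exp (-(z / b')) := by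
      rw [← Real.exp_add, ha_def]
      congr 1
      field_simp
      ring
    simp only [hF_def, fl, Nat.add_sub_cancel, ← hμs_def, ← hβs_def, hE, mul_pow]
    ring
  clear_value a
  set K : ℝ := μs * Real.exp (-(x / βs)) / (βs * a ^ 2) with hK_def
  set y : ℝ := μs * x / (βs * a) with hy_def
  have hInt : ∀ l : ℕ, IntegrableOn (F l) (Ioi (0 : ℝ)) := by
    intro l
    have hfe : F l = fun z : ℝ => (μs ^ (l + 1) * x ^ l * Real.exp (-(x / βs)) /
          (((l + 1).factorial : ℝ) * βs ^ (l + 1) * (l.factorial : ℝ)))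
        * (z ^ (l + 1) * Real.exp (-(a * z))) := funext (key l)
    rw [hfe]
    exact (integrable_pow_mul_exp (l + 1) ha).const_mul _
  have hIntval : ∀ l : ℕ, ∫ z in Ioi (0 : ℝ), F l z = K * (y ^ l / (l.factorial : ℝ)) := by
    intro l
    simp_rw [key l]
    rw [integral_const_mul, integral_pow_mul_exp (l + 1) ha]
    have hfac1 : (((l + 1).factorial : ℕ) : ℝ) ≠ 0 := Nat.cast_ne_zero.mpr (l + 1).factorial_ne_zero
    have hfac2 : ((l.factorial : ℕ) : ℝ) ≠ 0 := Nat.cast_ne_zero.mpr l.factorial_ne_zero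
    rw [hK_def, hy_def, div_pow, mul_pow]
    rw [Nat.factorial_succ]
    push_cast
    field_simp
    ring
  have hnorm : ∀ l : ℕ, ∫ z in Ioi (0 : ℝ), ‖F l z‖ = K * (y ^ l / (l.factorial : ℝ)) := by
    intro l
    rw [← hIntval l]
    refine setIntegral_congr_fun measurableSet_Ioi (fun z hz => ?_)
    rw [Real.norm_eq_abs, abs_of_nonneg]
    rw [key l z]
    have hz0 : (0 : ℝ) < z := hz
    have h1 : 0 ≤ μs ^ (l + 1) * x ^ l * Real.exp (-(x / βs)) /
        (((l + 1).factorial : ℝ) * βs ^ (l + 1) * (l.factorial : ℝ)) := by positivity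
    exact mul_nonneg h1 (mul_nonneg (pow_nonneg hz0.le _) (Real.exp_nonneg _))
  have hsum : Summable (fun l : ℕ => K * (y ^ l / (l.factorial : ℝ))) :=
    (Real.summable_pow_div_factorial y).mul_left K
  have hswap := MeasureTheory.integral_tsum_of_summable_integral_norm
    (μ := volume.restrict (Ioi (0 : ℝ))) hInt
    (by rw [show (fun l : ℕ => ∫ z, ‖F l z‖ ∂(volume.restrict (Ioi (0:ℝ)))) =
          fun l : ℕ => K * (y ^ l / (l.factorial : ℝ)) from funext hnorm]
        exact hsum)
  have hlhs : ∫ z in Set.Ioi (0 : ℝ), Real.exp (-(z / b')) * fplus z x s α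
      = ∫ z in Ioi (0 : ℝ), ∑' l : ℕ, F l z := by
    refine setIntegral_congr_fun measurableSet_Ioi (fun z _ => ?_)
    simp only [fplus, hF_def]
    exact (tsum_mul_left).symm
  rw [hlhs, ← hswap]
  rw [show (fun l : ℕ => ∫ z, F l z ∂(volume.restrict (Ioi (0:ℝ)))) =
      fun l : ℕ => K * (y ^ l / (l.factorial : ℝ)) from funext hIntval]
  rw [tsum_mul_left, (NormedSpace.expSeries_div_hasSum_exp y).tsum_eq, ← Real.exp_eq_exp_ℝ]
  have hii : Real.exp (-(x / βs)) * Real.exp y = Real.exp (-(x / βt)) := by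
    rw [← Real.exp_add]
    congr 1
    have hμab : μs = a - 1 / b' := by rw [ha_def]; ring
    rw [hy_def, h5, hμab]
    field_simp
    ring
  have hμt : muF t α = Real.exp (α * t) / βt := muF_eq ht
  have hμ'' : muF (t - s) α = Real.exp (α * (t - s)) / b' := muF_eq hts
  have hμs' : μs = Real.exp (α * s) / βs := muF_eq hs
  have hexp : Real.exp (α * s) * Real.exp (α * (t - s)) = Real.exp (α * t) := by
    rw [← Real.exp_add]; ring_nf
  rw [← hii, hK_def, hμt, hμ'', hμs', h5, ← hexp]
  have hE1 := (Real.exp_pos (α * s)).ne'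
  have hE2 := (Real.exp_pos (α * (t - s))).ne'
  field_simp
end

section
/- For every real y > 0 and all integers n ≥ k ≥ 1, one has ∑_{l=k}^∞ C(l,k) · (n!/l_{(n)}) · C(n−1, k−1) · y^{l−1}/(l−1)! = ( n_{[k]} / ( n_{(k)} (k−1)! ) ) · y^{k−1} · ∑_{j=0}^∞ ( (k+1)_{(j)} / (k+n)_{(j)} ) · y^j / j!, where both series converge absolutely. (This series identity, with y = x(1/β(s) − 1/β(t)), is the content of Theorem 3 giving the distribution of the number of ancestors of a sample of size n in terms of Kummer's confluent hypergeometric function ₁F₁(k+1; k+n; y).) -/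
open MeasureTheory Real Filter Set

/-- Rising factorial a_{(m)} = a(a+1)⋯(a+m−1). -/
noncomputable def rising (a : ℝ) : ℕ → ℝ
  | 0 => 1
  | m + 1 => rising a m * (a + m)

lemma rising_pos {a : ℝ} (ha : 0 < a) (m : ℕ) : 0 < rising a m := by
  induction m with
  | zero => simp [rising]
  | succ m ih =>
    have h : (0:ℝ) < a + m := by positivity
    exact mul_pos ih h

lemma rising_le {a b : ℝ} (ha : 0 < a) (hab : a ≤ b) (m : ℕ) : rising a m ≤ rising b m := by
  induction m with
  | zero => simp [rising]
  | succ m ih =>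
    have hb : 0 < b := lt_of_lt_of_le ha hab
    exact mul_le_mul ih (by linarith) (by positivity) (rising_pos hb m).le

lemma rising_fact (a m : ℕ) (ha : 1 ≤ a) :
    rising (a : ℝ) m = (Nat.factorial (a + m - 1) : ℝ) / (Nat.factorial (a - 1) : ℝ) := by
  induction m with
  | zero =>
    simp only [rising, Nat.add_zero]
    rw [div_self (by exact_mod_cast (Nat.factorial_pos _).ne')]
  | succ m ih =>
    have h1 : a + (m + 1) - 1 = (a + m - 1) + 1 := by omega
    have h2 : ((a + m - 1 : ℕ) : ℝ) + 1 = (a : ℝ) + m := by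
      have : (a + m - 1) + 1 = a + m := by omega
      calc ((a + m - 1 : ℕ) : ℝ) + 1 = (((a + m - 1) + 1 : ℕ) : ℝ) := by push_cast; ring
        _ = (a : ℝ) + m := by rw [this]; push_cast; ring
    rw [show rising (a:ℝ) (m+1) = rising (a:ℝ) m * ((a:ℝ) + m) from rfl, ih, h1,
      Nat.factorial_succ]
    push_cast
    rw [h2]
    ring

lemma cast_descFact (n k : ℕ) (h : k ≤ n) :
    (Nat.descFactorial n k : ℝ) = (Nat.factorial n : ℝ) / (Nat.factorial (n - k) : ℝ) := by
  rw [eq_div_iff (by exact_mod_cast (Nat.factorial_pos _).ne')]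
  rw [mul_comm]
  exact_mod_cast congrArg (Nat.cast (R := ℝ)) (Nat.factorial_mul_descFactorial h)

lemma term_eq (y : ℝ) (n k j : ℕ) (hk : 1 ≤ k) (hkn : k ≤ n) :
    (Nat.choose (j + k) k : ℝ) * ((Nat.factorial n : ℝ) / rising ((j + k : ℕ) : ℝ) n) *
      (Nat.choose (n - 1) (k - 1) : ℝ) * y ^ (j + k - 1) / (Nat.factorial (j + k - 1) : ℝ)
    = ((Nat.descFactorial n k : ℝ) / (rising (n : ℝ) k * (Nat.factorial (k - 1) : ℝ))) *
        y ^ (k - 1) *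
        ((rising ((k : ℝ) + 1) j / rising ((k : ℝ) + n) j) * y ^ j /
          (Nat.factorial j : ℝ)) := by
  have hn : 1 ≤ n := hk.trans hkn
  have e1 : rising ((j + k : ℕ) : ℝ) n
      = (Nat.factorial (j + k + n - 1) : ℝ) / (Nat.factorial (j + k - 1) : ℝ) :=
    rising_fact (j + k) n (by omega)
  have e2 : rising ((k : ℝ) + 1) j
      = (Nat.factorial (k + j) : ℝ) / (Nat.factorial k : ℝ) := by
    have := rising_fact (k + 1) j (by omega)
    rw [show ((k + 1 : ℕ) : ℝ) = (k : ℝ) + 1 by push_cast; ring] at this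
    rw [this, show k + 1 + j - 1 = k + j by omega, show k + 1 - 1 = k by omega]
  have e3 : rising ((k : ℝ) + n) j
      = (Nat.factorial (j + k + n - 1) : ℝ) / (Nat.factorial (k + n - 1) : ℝ) := by
    have := rising_fact (k + n) j (by omega)
    rw [show ((k + n : ℕ) : ℝ) = (k : ℝ) + n by push_cast; ring] at this
    rw [this, show k + n + j - 1 = j + k + n - 1 by omega]
  have e4 : rising (n : ℝ) k
      = (Nat.factorial (k + n - 1) : ℝ) / (Nat.factorial (n - 1) : ℝ) := by
    rw [rising_fact n k hn, show n + k - 1 = k + n - 1 by omega]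
  have c1 : (Nat.choose (j + k) k : ℝ)
      = (Nat.factorial (j + k) : ℝ) / ((Nat.factorial k : ℝ) * (Nat.factorial j : ℝ)) := by
    rw [Nat.cast_choose ℝ (by omega : k ≤ j + k), show j + k - k = j by omega]
  have c2 : (Nat.choose (n - 1) (k - 1) : ℝ)
      = (Nat.factorial (n - 1) : ℝ) /
        ((Nat.factorial (k - 1) : ℝ) * (Nat.factorial (n - k) : ℝ)) := by
    rw [Nat.cast_choose ℝ (by omega : k - 1 ≤ n - 1), show n - 1 - (k - 1) = n - k by omega]
  rw [e1, e2, e3, e4, c1, c2, cast_descFact n k hkn,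
    show j + k - 1 = (k - 1) + j by omega, pow_add,
    show k + j = j + k by omega]
  have f0 : (Nat.factorial (j + k) : ℝ) ≠ 0 := by exact_mod_cast (Nat.factorial_pos _).ne'
  have f1 : (Nat.factorial (j + k - 1) : ℝ) ≠ 0 := by exact_mod_cast (Nat.factorial_pos _).ne'
  have f2 : (Nat.factorial (j + k + n - 1) : ℝ) ≠ 0 := by
    exact_mod_cast (Nat.factorial_pos _).ne'
  have f3 : (Nat.factorial (k + n - 1) : ℝ) ≠ 0 := by exact_mod_cast (Nat.factorial_pos _).ne'
  have f4 : (Nat.factorial (n - 1) : ℝ) ≠ 0 := by exact_mod_cast (Nat.factorial_pos _).ne'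
  have f5 : (Nat.factorial (n - k) : ℝ) ≠ 0 := by exact_mod_cast (Nat.factorial_pos _).ne'
  have f6 : (Nat.factorial k : ℝ) ≠ 0 := by exact_mod_cast (Nat.factorial_pos _).ne'
  have f7 : (Nat.factorial (k - 1) : ℝ) ≠ 0 := by exact_mod_cast (Nat.factorial_pos _).ne'
  have f8 : (Nat.factorial j : ℝ) ≠ 0 := by exact_mod_cast (Nat.factorial_pos _).ne'
  have f9 : (Nat.factorial n : ℝ) ≠ 0 := by exact_mod_cast (Nat.factorial_pos _).ne'
  field_simp

theorem stmt8 (y : ℝ) (hy : 0 < y) (n k : ℕ) (hk : 1 ≤ k) (hkn : k ≤ n) :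
    Summable (fun l : ℕ =>
        if k ≤ l then
          (Nat.choose l k : ℝ) * ((Nat.factorial n : ℝ) / rising (l : ℝ) n) *
            (Nat.choose (n - 1) (k - 1) : ℝ) * y ^ (l - 1) / (Nat.factorial (l - 1) : ℝ)
        else 0) ∧
    Summable (fun j : ℕ =>
        (rising ((k : ℝ) + 1) j / rising ((k : ℝ) + n) j) * y ^ j / (Nat.factorial j : ℝ)) ∧
    (∑' l : ℕ,
        if k ≤ l then
          (Nat.choose l k : ℝ) * ((Nat.factorial n : ℝ) / rising (l : ℝ) n) *
            (Nat.choose (n - 1) (k - 1) : ℝ) * y ^ (l - 1) / (Nat.factorial (l - 1) : ℝ)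
        else 0)
      = ((Nat.descFactorial n k : ℝ) / (rising (n : ℝ) k * (Nat.factorial (k - 1) : ℝ))) *
          y ^ (k - 1) *
          ∑' j : ℕ,
            (rising ((k : ℝ) + 1) j / rising ((k : ℝ) + n) j) * y ^ j /
              (Nat.factorial j : ℝ) := by
  have hn : 1 ≤ n := hk.trans hkn
  set f : ℕ → ℝ := fun l =>
    if k ≤ l then
      (Nat.choose l k : ℝ) * ((Nat.factorial n : ℝ) / rising (l : ℝ) n) *
        (Nat.choose (n - 1) (k - 1) : ℝ) * y ^ (l - 1) / (Nat.factorial (l - 1) : ℝ)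
    else 0 with hf
  set g : ℕ → ℝ := fun j =>
    (rising ((k : ℝ) + 1) j / rising ((k : ℝ) + n) j) * y ^ j / (Nat.factorial j : ℝ)
    with hg
  set C : ℝ := ((Nat.descFactorial n k : ℝ) /
    (rising (n : ℝ) k * (Nat.factorial (k - 1) : ℝ))) * y ^ (k - 1) with hC
  -- summability of g
  have hgsum : Summable g := by
    have hnpos : (0:ℝ) < n := by exact_mod_cast hn
    have hpos : ∀ j : ℕ, 0 ≤ g j := by
      intro j
      have h1 : 0 < rising ((k : ℝ) + 1) j := rising_pos (by positivity) j
      have h2 : 0 < rising ((k : ℝ) + n) j := rising_pos (by positivity) j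
      simp only [hg]
      positivity
    have hle : ∀ j : ℕ, g j ≤ y ^ j / (Nat.factorial j : ℝ) := by
      intro j
      have h1 : 0 < rising ((k : ℝ) + 1) j := rising_pos (by positivity) j
      have h2 : 0 < rising ((k : ℝ) + n) j := rising_pos (by positivity) j
      have hr : rising ((k : ℝ) + 1) j / rising ((k : ℝ) + n) j ≤ 1 := by
        apply (div_le_one h2).mpr
        apply rising_le (by positivity)
        have hn1 : (1:ℝ) ≤ n := by exact_mod_cast hn
        linarith
      have hfj : 0 < (Nat.factorial j : ℝ) := by exact_mod_cast Nat.factorial_pos j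
      simp only [hg]
      calc rising ((k : ℝ) + 1) j / rising ((k : ℝ) + n) j * y ^ j / (Nat.factorial j : ℝ)
          ≤ 1 * y ^ j / (Nat.factorial j : ℝ) := by gcongr
        _ = y ^ j / (Nat.factorial j : ℝ) := by ring
    exact Summable.of_nonneg_of_le hpos hle (Real.summable_pow_div_factorial y)
  have hterm : ∀ j : ℕ, f (j + k) = C * g j := by
    intro j
    have hkjk : k ≤ j + k := by omega
    simp only [hf, hg, hC, if_pos hkjk]
    rw [term_eq y n k j hk hkn]
  have hfsum : Summable f := by
    rw [← summable_nat_add_iff k]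
    simp only [hterm]
    exact hgsum.mul_left C
  refine ⟨hfsum, hgsum, ?_⟩
  rw [← Summable.sum_add_tsum_nat_add k hfsum]
  have hzero : ∀ i ∈ Finset.range k, f i = 0 := by
    intro i hi
    have : ¬ k ≤ i := by have := Finset.mem_range.mp hi; omega
    simp [hf, this]
  rw [Finset.sum_eq_zero hzero, zero_add]
  simp only [hterm]
  rw [tsum_mul_left]
end

section
/- For every real α ≥ 0, every s > 0, every x > 0 and every integer k ≥ 1, one has ∫_s^∞ ( (x/β(s;α) − x/β(t;α))^{k−1} / (k−1)! ) · e^{−(x/β(s;α) − x/β(t;α))} · (x/2)(μ(t;α)/β(t;α)) e^{−x/β(t;α)} dt = (1/k!) (x/β(s;α))^k e^{−x/β(s;α)}. (Averaging the shifted-Poisson ancestor distribution against the posterior density of T₁ under an improper uniform prior yields the Poisson ancestor distribution of Theorem 7.) -/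
open MeasureTheory Real Filter Set Topology

lemma key13 (s c : ℝ) (k : ℕ) (hk : 1 ≤ k) (g g' : ℝ → ℝ)
    (hcont : ContinuousWithinAt g (Set.Ici s) s)
    (hderiv : ∀ t ∈ Set.Ioi s, HasDerivAt g (g' t) t)
    (hgs : g s = 0)
    (hg'nonneg : ∀ t ∈ Set.Ioi s, 0 ≤ g' t)
    (hgnonneg : ∀ t ∈ Set.Ioi s, 0 ≤ g t)
    (htend : Tendsto g atTop (𝓝 c)) :
    ∫ t in Set.Ioi s, Real.exp (-c) / (Nat.factorial (k - 1) : ℝ) * (g t ^ (k - 1) * g' t)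
      = 1 / (Nat.factorial k : ℝ) * c ^ k * Real.exp (-c) := by
  set F : ℝ → ℝ := fun t => Real.exp (-c) / (Nat.factorial k : ℝ) * g t ^ k with hF
  have hFderiv : ∀ t ∈ Set.Ioi s, HasDerivAt F
      (Real.exp (-c) / (Nat.factorial (k - 1) : ℝ) * (g t ^ (k - 1) * g' t)) t := by
    intro t ht
    have h : HasDerivAt (fun y => Real.exp (-c) / (Nat.factorial k : ℝ) * g y ^ k)
        (Real.exp (-c) / (Nat.factorial k : ℝ) * (k * g t ^ (k - 1) * g' t)) t :=
      ((hderiv t ht).pow k).const_mul (Real.exp (-c) / (Nat.factorial k : ℝ))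
    convert h using 1
    have hfac : (Nat.factorial k : ℝ) = k * (Nat.factorial (k - 1) : ℝ) := by
      rw [← Nat.cast_mul]
      congr 1
      conv_lhs => rw [← Nat.succ_pred_eq_of_pos hk, Nat.factorial_succ]
      rw [Nat.pred_eq_sub_one, Nat.sub_add_cancel hk]
    have hk0 : (Nat.factorial (k - 1) : ℝ) ≠ 0 := Nat.cast_ne_zero.2 (Nat.factorial_ne_zero _)
    rw [hfac]
    have hk1 : (k:ℝ) ≠ 0 := by norm_cast; omega
    field_simp
  have hFcont : ContinuousWithinAt F (Set.Ici s) s :=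
    continuousWithinAt_const.mul (hcont.pow k)
  have hFtend : Tendsto F atTop (𝓝 (Real.exp (-c) / (Nat.factorial k : ℝ) * c ^ k)) :=
    tendsto_const_nhds.mul (htend.pow k)
  have hnonneg : ∀ t ∈ Set.Ioi s, 0 ≤ Real.exp (-c) / (Nat.factorial (k - 1) : ℝ) *
      (g t ^ (k - 1) * g' t) := by
    intro t ht
    have h1 := hgnonneg t ht
    have h2 := hg'nonneg t ht
    positivity
  rw [integral_Ioi_of_hasDerivAt_of_nonneg hFcont hFderiv hnonneg hFtend]
  simp [hF, hgs, zero_pow (Nat.one_le_iff_ne_zero.mp hk)]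
  ring

theorem stmt13 (α s x : ℝ) (hα : 0 ≤ α) (hs : 0 < s) (hx : 0 < x) (k : ℕ) (hk : 1 ≤ k) :
    ∫ t in Set.Ioi s,
        ((x / betaF s α - x / betaF t α) ^ (k - 1) / (Nat.factorial (k - 1) : ℝ)) *
          Real.exp (-(x / betaF s α - x / betaF t α)) *
          ((x / 2) * (muF t α / betaF t α) * Real.exp (-(x / betaF t α)))
      = (1 / (Nat.factorial k : ℝ)) * (x / betaF s α) ^ k * Real.exp (-(x / betaF s α)) := by
  rcases hα.eq_or_lt with h0 | hpos
  · -- α = 0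
    subst h0
    have hb : ∀ t : ℝ, betaF t 0 = t / 2 := fun t => if_pos rfl
    have hm : ∀ t : ℝ, muF t 0 = 2 / t := fun t => if_pos rfl
    simp only [hb, hm]
    have hxs : x / (s / 2) = 2 * x / s := by field_simp
    rw [hxs]
    set c : ℝ := 2 * x / s with hc
    set g : ℝ → ℝ := fun t => c - 2 * x / t with hgdef
    set g' : ℝ → ℝ := fun t => 2 * x / t ^ 2 with hg'def
    have hEq : EqOn (fun t => ((2 * x / s - x / (t / 2)) ^ (k - 1) / (Nat.factorial (k - 1) : ℝ)) *
          Real.exp (-(2 * x / s - x / (t / 2))) *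
          ((x / 2) * ((2 / t) / (t / 2)) * Real.exp (-(x / (t / 2)))))
        (fun t => Real.exp (-c) / (Nat.factorial (k - 1) : ℝ) * (g t ^ (k - 1) * g' t))
        (Set.Ioi s) := by
      intro t ht
      have ht0 : 0 < t := hs.trans ht
      have e1 : x / (t / 2) = 2 * x / t := by field_simp
      have e3 : (x / 2) * ((2 / t) / (t / 2)) = 2 * x / t ^ 2 := by
        field_simp
      have e4 : Real.exp (-(c - 2 * x / t)) * Real.exp (-(2 * x / t)) = Real.exp (-c) := by
        rw [← Real.exp_add]; ring_nf
      simp only [e1, e3, hgdef, hg'def, hc]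
      calc ((2 * x / s - 2 * x / t) ^ (k - 1) / (Nat.factorial (k - 1) : ℝ)) *
            Real.exp (-(2 * x / s - 2 * x / t)) * (2 * x / t ^ 2 * Real.exp (-(2 * x / t)))
          = (Real.exp (-(2 * x / s - 2 * x / t)) * Real.exp (-(2 * x / t))) *
            ((2 * x / s - 2 * x / t) ^ (k - 1) / (Nat.factorial (k - 1) : ℝ) *
              (2 * x / t ^ 2)) := by ring
        _ = _ := by rw [e4]; ring
    rw [setIntegral_congr_fun measurableSet_Ioi hEq]
    have hderiv : ∀ t ∈ Set.Ici s, HasDerivAt g (g' t) t := by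
      intro t ht
      have ht0 : 0 < t := lt_of_lt_of_le hs ht
      have h : HasDerivAt g (-(2 * x * -(t ^ 2)⁻¹)) t :=
        ((hasDerivAt_inv ht0.ne').const_mul (2 * x)).const_sub c
      convert h using 1
      simp only [hg'def]
      field_simp
    apply key13 s c k hk g g'
    · exact (hderiv s Set.self_mem_Ici).continuousAt.continuousWithinAt
    · exact fun t ht => hderiv t (le_of_lt (Set.mem_Ioi.mp ht))
    · simp [hgdef, hc]
    · intro t ht
      have ht0 : 0 < t := hs.trans ht
      simp only [hg'def]; positivity
    · intro t ht
      have ht0 : 0 < t := hs.trans ht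
      have : 2 * x / t ≤ 2 * x / s :=
        div_le_div_of_nonneg_left (by positivity) hs (le_of_lt ht)
      simp only [hgdef, hc]; linarith
    · have h0 : Tendsto (fun t : ℝ => 2 * x / t) atTop (𝓝 0) :=
        tendsto_const_nhds.div_atTop tendsto_id
      simpa using tendsto_const_nhds.sub h0
  · -- α > 0
    have hαne : α ≠ 0 := hpos.ne'
    have hb : ∀ t : ℝ, betaF t α = (Real.exp (α * t) - 1) / (2 * α) := fun t => if_neg hαne
    have hm : ∀ t : ℝ, muF t α = 2 * α * Real.exp (α * t) / (Real.exp (α * t) - 1) :=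
      fun t => if_neg hαne
    have hE : ∀ t : ℝ, 0 < t → 1 < Real.exp (α * t) := by
      intro t ht
      rw [← Real.exp_zero]
      exact Real.exp_lt_exp.mpr (by positivity)
    have hEs := hE s hs
    simp only [hb, hm]
    have hxs : x / ((Real.exp (α * s) - 1) / (2 * α)) = 2 * α * x / (Real.exp (α * s) - 1) := by
      rw [div_div_eq_mul_div]; ring_nf
    rw [hxs]
    set c : ℝ := 2 * α * x / (Real.exp (α * s) - 1) with hc
    set g : ℝ → ℝ := fun t => c - 2 * α * x / (Real.exp (α * t) - 1) with hgdef
    set g' : ℝ → ℝ := fun t =>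
      2 * α ^ 2 * x * Real.exp (α * t) / (Real.exp (α * t) - 1) ^ 2 with hg'def
    have hEq : EqOn (fun t => ((2 * α * x / (Real.exp (α * s) - 1) -
            x / ((Real.exp (α * t) - 1) / (2 * α))) ^ (k - 1) / (Nat.factorial (k - 1) : ℝ)) *
          Real.exp (-(2 * α * x / (Real.exp (α * s) - 1) - x / ((Real.exp (α * t) - 1) / (2 * α)))) *
          ((x / 2) * ((2 * α * Real.exp (α * t) / (Real.exp (α * t) - 1)) /
              ((Real.exp (α * t) - 1) / (2 * α))) * Real.exp (-(x / ((Real.exp (α * t) - 1) / (2 * α))))))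
        (fun t => Real.exp (-c) / (Nat.factorial (k - 1) : ℝ) * (g t ^ (k - 1) * g' t))
        (Set.Ioi s) := by
      intro t ht
      have ht0 : 0 < t := hs.trans ht
      have hEt := hE t ht0
      have hEt0 : Real.exp (α * t) - 1 ≠ 0 := by linarith
      have e1 : x / ((Real.exp (α * t) - 1) / (2 * α)) = 2 * α * x / (Real.exp (α * t) - 1) := by
        rw [div_div_eq_mul_div]; ring_nf
      have e3 : (x / 2) * ((2 * α * Real.exp (α * t) / (Real.exp (α * t) - 1)) /
          ((Real.exp (α * t) - 1) / (2 * α))) = g' t := by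
        simp only [hg'def]
        field_simp
      have e4 : Real.exp (-(c - 2 * α * x / (Real.exp (α * t) - 1))) *
          Real.exp (-(2 * α * x / (Real.exp (α * t) - 1))) = Real.exp (-c) := by
        rw [← Real.exp_add]; ring_nf
      simp only [e1, e3]
      calc ((c - 2 * α * x / (Real.exp (α * t) - 1)) ^ (k - 1) / (Nat.factorial (k - 1) : ℝ)) *
            Real.exp (-(c - 2 * α * x / (Real.exp (α * t) - 1))) *
            (g' t * Real.exp (-(2 * α * x / (Real.exp (α * t) - 1))))
          = (Real.exp (-(c - 2 * α * x / (Real.exp (α * t) - 1))) *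
              Real.exp (-(2 * α * x / (Real.exp (α * t) - 1)))) *
            ((c - 2 * α * x / (Real.exp (α * t) - 1)) ^ (k - 1) /
              (Nat.factorial (k - 1) : ℝ) * g' t) := by ring
        _ = _ := by rw [e4]; simp only [hgdef]; ring
    rw [setIntegral_congr_fun measurableSet_Ioi hEq]
    have hderiv : ∀ t ∈ Set.Ici s, HasDerivAt g (g' t) t := by
      intro t ht
      have ht0 : 0 < t := lt_of_lt_of_le hs ht
      have hEt := hE t ht0
      have hEt0 : Real.exp (α * t) - 1 ≠ 0 := by linarith
      have h1 : HasDerivAt (fun u : ℝ => Real.exp (α * u) - 1) (Real.exp (α * t) * α) t := by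
        simpa using ((hasDerivAt_id t).const_mul α).exp.sub_const 1
      have h2 : HasDerivAt g
          (-(2 * α * x * (-(Real.exp (α * t) * α) / (Real.exp (α * t) - 1) ^ 2))) t :=
        ((h1.inv hEt0).const_mul (2 * α * x)).const_sub c
      convert h2 using 1
      simp only [hg'def]
      field_simp
    apply key13 s c k hk g g'
    · exact (hderiv s Set.self_mem_Ici).continuousAt.continuousWithinAt
    · exact fun t ht => hderiv t (le_of_lt (Set.mem_Ioi.mp ht))
    · simp [hgdef, hc]
    · intro t ht
      have ht0 : 0 < t := hs.trans ht
      have hEt := hE t ht0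
      simp only [hg'def]
      have h1 : Real.exp (α * t) - 1 > 0 := by linarith
      positivity
    · intro t ht
      have ht0 : 0 < t := hs.trans ht
      have hEt := hE t ht0
      have hmono : Real.exp (α * s) ≤ Real.exp (α * t) :=
        Real.exp_le_exp.mpr (by nlinarith [le_of_lt (Set.mem_Ioi.mp ht)])
      have : 2 * α * x / (Real.exp (α * t) - 1) ≤ 2 * α * x / (Real.exp (α * s) - 1) :=
        div_le_div_of_nonneg_left (by positivity) (by linarith) (by linarith)
      simp only [hgdef, hc]; linarith
    · have hlin : Tendsto (fun t : ℝ => α * t) atTop atTop :=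
        tendsto_id.const_mul_atTop hpos
      have hexp : Tendsto (fun t : ℝ => Real.exp (α * t)) atTop atTop :=
        Real.tendsto_exp_atTop.comp hlin
      have hdenom : Tendsto (fun t : ℝ => Real.exp (α * t) - 1) atTop atTop := by
        simpa [sub_eq_add_neg] using tendsto_atTop_add_const_right atTop (-1) hexp
      have h0 : Tendsto (fun t : ℝ => 2 * α * x / (Real.exp (α * t) - 1)) atTop (𝓝 0) :=
        tendsto_const_nhds.div_atTop hdenom
      simpa [hgdef] using tendsto_const_nhds.sub h0
end

section
/- For every real α ≥ 0, every x > 0 and every integer k ≥ 1, one has ∫₀^∞ (1/(k−1)!) · (x/β(s;α))^{k−1} · (x μ(s;α)/(2 β(s;α))) · e^{−x/β(s;α)} ds = 1. (This says the posterior marginal density of the k-th coalescent time under an improper uniform prior on the time since a single founding ancestor, given in Theorem 7, is a probability density on (0, ∞).) -/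
open MeasureTheory Real Filter Set Topology

lemma betaF_pos_s14 {α s : ℝ} (hα : 0 ≤ α) (hs : 0 < s) : 0 < betaF s α := by
  unfold betaF
  rcases eq_or_lt_of_le hα with h | h
  · simp [← h]; linarith
  · rw [if_neg h.ne']
    apply div_pos _ (by linarith)
    have := Real.add_one_le_exp (α * s)
    nlinarith

lemma muF_betaF {α s : ℝ} (hα : 0 ≤ α) (hs : 0 < s) :
    muF s α * betaF s α = Real.exp (α * s) := by
  unfold muF betaF
  rcases eq_or_lt_of_le hα with h | h
  · rw [← h]; simp
    exact hs.ne'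
  · rw [if_neg h.ne', if_neg h.ne']
    have he : Real.exp (α * s) - 1 ≠ 0 := by
      have := Real.add_one_le_exp (α * s); nlinarith
    field_simp
    

lemma betaF_hasDerivAt (α s : ℝ) :
    HasDerivAt (fun t => betaF t α) (Real.exp (α * s) / 2) s := by
  unfold betaF
  by_cases h : α = 0
  · simp only [h, if_pos rfl, zero_mul, Real.exp_zero]
    exact (hasDerivAt_id s).div_const 2
  · simp only [if_neg h]
    have h1 : HasDerivAt (fun t => Real.exp (α * t)) (α * Real.exp (α * s)) s := by
      simpa [mul_comm, Function.comp_def] using (Real.hasDerivAt_exp (α * s)).comp s ((hasDerivAt_id s).const_mul α)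
    have h2 := (h1.sub_const 1).div_const (2 * α)
    exact h2.congr_deriv (by field_simp)

lemma gderiv (m : ℕ) (u : ℝ) :
    HasDerivAt (fun u : ℝ => ∑ j ∈ Finset.range (m + 1), u ^ j * Real.exp (-u) / j.factorial)
      (-(u ^ m * Real.exp (-u) / m.factorial)) u := by
  have hexp : HasDerivAt (fun u : ℝ => Real.exp (-u)) (-Real.exp (-u)) u := by
    simpa [Function.comp_def] using (Real.hasDerivAt_exp (-u)).comp u (hasDerivAt_id u).neg
  induction m with
  | zero =>
    have : HasDerivAt (fun u : ℝ => u ^ 0 * Real.exp (-u) / (Nat.factorial 0 : ℝ))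
        (-(u ^ 0 * Real.exp (-u) / (Nat.factorial 0 : ℝ))) u := by
      simpa using hexp
    simpa [Finset.sum_range_one] using this
  | succ n ih =>
    have hterm : HasDerivAt (fun u : ℝ => u ^ (n+1) * Real.exp (-u) / ((n+1).factorial : ℝ))
        (((n+1 : ℕ) * u ^ n * Real.exp (-u) + u ^ (n+1) * (-Real.exp (-u))) / ((n+1).factorial : ℝ)) u := by
      simpa using ((hasDerivAt_pow (n+1) u).mul hexp).div_const ((n+1).factorial : ℝ)
    have h := ih.add hterm
    have heq : (fun u : ℝ => ∑ j ∈ Finset.range (n + 2), u ^ j * Real.exp (-u) / j.factorial)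
        = fun u : ℝ => (∑ j ∈ Finset.range (n + 1), u ^ j * Real.exp (-u) / j.factorial)
          + u ^ (n+1) * Real.exp (-u) / ((n+1).factorial : ℝ) := by
      funext v; rw [Finset.sum_range_succ]
    rw [heq]
    refine h.congr_deriv ?_
    have hf : ((n+1).factorial : ℝ) = (n+1) * (n.factorial : ℝ) := by
      rw [Nat.factorial_succ]; push_cast; ring
    have hn0 : (n.factorial : ℝ) ≠ 0 := Nat.cast_ne_zero.2 n.factorial_ne_zero
    rw [hf]
    field_simp
    push_cast
    ring

theorem stmt14 (α x : ℝ) (hα : 0 ≤ α) (hx : 0 < x) (k : ℕ) (hk : 1 ≤ k) :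
    ∫ s in Set.Ioi (0 : ℝ),
        (1 / (Nat.factorial (k - 1) : ℝ)) * (x / betaF s α) ^ (k - 1) *
          (x * muF s α / (2 * betaF s α)) * Real.exp (-(x / betaF s α))
      = 1 := by
  obtain ⟨m, rfl⟩ : ∃ m, k = m + 1 := ⟨k - 1, (Nat.succ_pred_eq_of_pos hk).symm⟩
  simp only [Nat.add_sub_cancel]
  set u : ℝ → ℝ := fun s => x / betaF s α with hu
  set G : ℝ → ℝ := fun s =>
    if s ≤ 0 then 0 else ∑ j ∈ Finset.range (m + 1), (u s) ^ j * Real.exp (-(u s)) / j.factorial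
    with hG
  set F : ℝ → ℝ := fun s =>
    (1 / (Nat.factorial m : ℝ)) * (x / betaF s α) ^ m *
      (x * muF s α / (2 * betaF s α)) * Real.exp (-(x / betaF s α)) with hF
  -- continuity of betaF and limits
  have hbeta0 : Tendsto (fun s => betaF s α) (𝓝[>] 0) (𝓝[>] 0) := by
    apply tendsto_nhdsWithin_of_tendsto_nhds_of_eventually_within
    · have hc : Continuous (fun s => betaF s α) := by
        unfold betaF
        by_cases h : α = 0
        · simp only [h, if_pos]; fun_prop
        · simp only [if_neg h]; fun_prop
      have : betaF 0 α = 0 := by unfold betaF; by_cases h : α = 0 <;> simp [h]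
      simpa [this] using (hc.tendsto 0).mono_left nhdsWithin_le_nhds
    · filter_upwards [self_mem_nhdsWithin] with s hs
      exact betaF_pos_s14 hα hs
  have hutop : Tendsto u (𝓝[>] 0) atTop := by
    have := tendsto_inv_nhdsGT_zero.comp hbeta0
    have h2 := this.const_mul_atTop hx
    simpa [hu, div_eq_mul_inv, Function.comp] using h2
  have hbetaTop : Tendsto (fun s => betaF s α) atTop atTop := by
    unfold betaF
    rcases eq_or_lt_of_le hα with h | h
    · simp only [← h, if_pos rfl]
      exact (tendsto_id.atTop_div_const (by norm_num))
    · simp only [if_neg h.ne']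
      apply Tendsto.atTop_div_const (by linarith)
      apply tendsto_atTop_add_const_right
      exact (Real.tendsto_exp_atTop).comp (tendsto_id.const_mul_atTop h)
  have hu0 : Tendsto u atTop (𝓝 0) := by
    have := tendsto_inv_atTop_zero.comp hbetaTop
    have h2 := this.const_mul x
    simpa [hu, div_eq_mul_inv, Function.comp] using h2
  -- the key application
  have key : ∫ s in Set.Ioi (0:ℝ), F s = 1 - G 0 := by
    apply integral_Ioi_of_hasDerivAt_of_nonneg
    · -- ContinuousWithinAt G (Ici 0) 0
      rw [← Set.Ioi_insert, continuousWithinAt_insert_self]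
      have hG0 : G 0 = 0 := by simp [hG]
      unfold ContinuousWithinAt
      rw [hG0]
      have hev : (fun s => ∑ j ∈ Finset.range (m + 1), (u s) ^ j * Real.exp (-(u s)) / j.factorial)
          =ᶠ[𝓝[>] (0:ℝ)] G := by
        filter_upwards [self_mem_nhdsWithin] with s hs
        simp [hG, not_le.2 (Set.mem_Ioi.1 hs)]
      apply Tendsto.congr' hev
      have : Tendsto (fun v : ℝ => ∑ j ∈ Finset.range (m + 1), v ^ j * Real.exp (-v) / j.factorial)
          atTop (𝓝 0) := by
        have : Tendsto (fun v : ℝ => ∑ j ∈ Finset.range (m + 1), v ^ j * Real.exp (-v) / j.factorial)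
            atTop (𝓝 (∑ j ∈ Finset.range (m + 1), (0:ℝ))) := by
          apply tendsto_finset_sum
          intro j _
          simpa using (tendsto_pow_mul_exp_neg_atTop_nhds_zero j).div_const (j.factorial : ℝ)
        simpa using this
      exact this.comp hutop
    · -- derivative
      intro s hs
      have hsp : (0:ℝ) < s := hs
      have hb := betaF_pos_s14 hα hsp
      have hbu : HasDerivAt u (-(x * (Real.exp (α * s) / 2)) / (betaF s α)^2) s := by
        have := (hasDerivAt_const s x).div (betaF_hasDerivAt α s) hb.ne'
        exact this.congr_deriv (by simp)
      have hgu := (gderiv m (u s)).comp s hbu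
      have hev : (fun t => ∑ j ∈ Finset.range (m + 1), (u t) ^ j * Real.exp (-(u t)) / j.factorial)
          =ᶠ[𝓝 s] G := by
        filter_upwards [eventually_gt_nhds hsp] with t ht
        simp [hG, not_le.2 ht]
      have hfinal : HasDerivAt G
          (-(u s ^ m * Real.exp (-u s) / m.factorial) *
            (-(x * (Real.exp (α * s) / 2)) / (betaF s α)^2)) s :=
        hgu.congr_of_eventuallyEq hev.symm
      refine hfinal.congr_deriv ?_
      symm
      rw [hF]
      have hmb := muF_betaF hα hsp
      have hfac : (m.factorial : ℝ) ≠ 0 := Nat.cast_ne_zero.2 m.factorial_ne_zero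
      rw [← hmb]
      field_simp [hu]
      ring
    · -- nonneg
      intro s hs
      have hsp : (0:ℝ) < s := hs
      have hb := betaF_pos_s14 hα hsp
      have hmu : 0 ≤ muF s α := by
        unfold muF
        rcases eq_or_lt_of_le hα with h | h
        · rw [← h]; simp; positivity
        · rw [if_neg h.ne']
          have := Real.add_one_le_exp (α * s)
          have h1 : 0 < Real.exp (α * s) - 1 := by nlinarith
          positivity
      rw [hF]
      have h1 : (0:ℝ) ≤ x / betaF s α := le_of_lt (div_pos hx hb)
      positivity
    · -- tendsto at top
      have hev : (fun s => ∑ j ∈ Finset.range (m + 1), (u s) ^ j * Real.exp (-(u s)) / j.factorial)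
          =ᶠ[atTop] G := by
        filter_upwards [eventually_gt_atTop (0:ℝ)] with s hs
        simp [hG, not_le.2 hs]
      apply Tendsto.congr' hev
      have hcg : Tendsto (fun v : ℝ => ∑ j ∈ Finset.range (m + 1), v ^ j * Real.exp (-v) / j.factorial)
          (𝓝 0) (𝓝 1) := by
        have hc : Continuous (fun v : ℝ => ∑ j ∈ Finset.range (m + 1), v ^ j * Real.exp (-v) / j.factorial) := by
          fun_prop
        have hval : ∑ j ∈ Finset.range (m + 1), (0:ℝ) ^ j * Real.exp (-(0:ℝ)) / j.factorial = 1 := by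
          rw [Finset.sum_range_succ']
          simp
        have := hc.tendsto 0
        rwa [hval] at this
      exact hcg.comp hu0
  have hG0 : G 0 = 0 := by simp [hG]
  rw [show (1:ℝ) = 1 - G 0 by rw [hG0]; ring]
  exact key
end

section
/- For every real α > 0, every real ŝ and every z > 0, setting s_x := ŝ + (1/α) log(2αx) for x large enough that s_x > 0, the limit as x → ∞ of (μ(s_x;α)/(2 β(s_x;α))) · x e^{−x/β(s_x;α)} · μ(s_x;α)² z e^{−z μ(s_x;α)} equals α e^{−α ŝ} e^{−e^{−α ŝ}} · 4 α² z e^{−2αz}. (This is the large-population limit of Theorem 12: in the shifted time variable the time back to the MRCA and the contemporaneous population size become independent, α T̃₂ being standard Gumbel and 2α X_MRCA being Gamma(2,1).) -/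
open MeasureTheory Real Filter Set

theorem stmt19 (α sh z : ℝ) (hα : 0 < α) (hz : 0 < z) :
    Filter.Tendsto (fun x : ℝ =>
        (muF (sh + (1 / α) * Real.log (2 * α * x)) α /
            (2 * betaF (sh + (1 / α) * Real.log (2 * α * x)) α)) *
          (x * Real.exp (-(x / betaF (sh + (1 / α) * Real.log (2 * α * x)) α))) *
          (muF (sh + (1 / α) * Real.log (2 * α * x)) α ^ 2 * z *
            Real.exp (-(z * muF (sh + (1 / α) * Real.log (2 * α * x)) α))))
      Filter.atTop
      (nhds (α * Real.exp (-(α * sh)) * Real.exp (-Real.exp (-(α * sh))) *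
        (4 * α ^ 2 * z * Real.exp (-(2 * α * z))))) := by
  have hα0 : α ≠ 0 := ne_of_gt hα
  set c : ℝ := 2 * α * Real.exp (α * sh) with hc_def
  have hc : 0 < c := by positivity
  have hc0 : c ≠ 0 := ne_of_gt hc
  set D : ℝ → ℝ := fun x => c - 1 / x with hD_def
  have hTD : Tendsto D atTop (nhds c) := by
    have h1 : Tendsto (fun x : ℝ => 1 / x) atTop (nhds 0) := by
      simpa [one_div] using (tendsto_inv_atTop_zero : Tendsto (fun x : ℝ => x⁻¹) atTop (nhds 0))
    rw [hD_def]
    simpa using tendsto_const_nhds.sub h1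
  -- limits of the pieces
  have t1 : Tendsto (fun x => 2 * α ^ 2 * c / (D x) ^ 2) atTop (nhds (2 * α ^ 2 * c / c ^ 2)) :=
    tendsto_const_nhds.div (hTD.pow 2) (pow_ne_zero _ hc0)
  have t2 : Tendsto (fun x => Real.exp (-(2 * α / D x))) atTop (nhds (Real.exp (-(2 * α / c)))) :=
    (Real.continuous_exp.tendsto _).comp (tendsto_const_nhds.div hTD hc0).neg
  have tmu : Tendsto (fun x => 2 * α * c / D x) atTop (nhds (2 * α * c / c)) :=
    tendsto_const_nhds.div hTD hc0
  have t3 : Tendsto (fun x => (2 * α * c / D x) ^ 2 * z * Real.exp (-(z * (2 * α * c / D x))))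
      atTop (nhds ((2 * α * c / c) ^ 2 * z * Real.exp (-(z * (2 * α * c / c))))) :=
    ((tmu.pow 2).mul_const z).mul
      ((Real.continuous_exp.tendsto _).comp (tmu.const_mul z).neg)
  have tF : Tendsto (fun x => (2 * α ^ 2 * c / (D x) ^ 2) * Real.exp (-(2 * α / D x)) *
      ((2 * α * c / D x) ^ 2 * z * Real.exp (-(z * (2 * α * c / D x))))) atTop
      (nhds ((2 * α ^ 2 * c / c ^ 2) * Real.exp (-(2 * α / c)) *
        ((2 * α * c / c) ^ 2 * z * Real.exp (-(z * (2 * α * c / c)))))) :=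
    (t1.mul t2).mul t3
  -- identify limit value
  have hval : (2 * α ^ 2 * c / c ^ 2) * Real.exp (-(2 * α / c)) *
      ((2 * α * c / c) ^ 2 * z * Real.exp (-(z * (2 * α * c / c)))) =
      α * Real.exp (-(α * sh)) * Real.exp (-Real.exp (-(α * sh))) *
        (4 * α ^ 2 * z * Real.exp (-(2 * α * z))) := by
    have h1 : 2 * α * c / c = 2 * α := by field_simp
    have h2 : 2 * α ^ 2 * c / c ^ 2 = α * Real.exp (-(α * sh)) := by
      rw [hc_def, Real.exp_neg]
      field_simp [Real.exp_ne_zero]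
    have h3 : -(2 * α / c) = -Real.exp (-(α * sh)) := by
      rw [hc_def, Real.exp_neg]
      field_simp
    rw [h1, h2, h3]
    ring_nf
  rw [← hval]
  apply tF.congr'
  filter_upwards [eventually_gt_atTop (1 / c), eventually_gt_atTop 0] with x hx1 hx0
  have hcx : 0 < c * x - 1 := by
    have : 1 / c < x := hx1
    rw [div_lt_iff₀ hc] at this
    linarith
  have h2ax : 0 < 2 * α * x := by positivity
  have hs : Real.exp (α * (sh + (1 / α) * Real.log (2 * α * x))) = c * x := by
    rw [mul_add, Real.exp_add]
    rw [show α * ((1 / α) * Real.log (2 * α * x)) = Real.log (2 * α * x) by field_simp]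
    rw [Real.exp_log h2ax, hc_def]
    ring
  have hDx : D x = (c * x - 1) / x := by
    rw [hD_def]
    field_simp
  have hcx0 : c * x - 1 ≠ 0 := ne_of_gt hcx
  have hDx0 : D x ≠ 0 := by
    rw [hDx]; positivity
  have hmu : muF (sh + (1 / α) * Real.log (2 * α * x)) α = 2 * α * c / D x := by
    rw [muF, if_neg hα0, hs, hDx]
    field_simp
  have hbeta : betaF (sh + (1 / α) * Real.log (2 * α * x)) α = (c * x - 1) / (2 * α) := by
    rw [betaF, if_neg hα0, hs]
  have hE : Real.exp (-(x / betaF (sh + (1 / α) * Real.log (2 * α * x)) α)) =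
      Real.exp (-(2 * α / D x)) := by
    rw [hbeta, hDx]
    congr 1
    rw [div_div_eq_mul_div, div_div_eq_mul_div, mul_comm]
  rw [hmu, hE, hbeta, hDx]
  field_simp
end
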